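/- Let X be a topological space and Y a space with a σ-disjoint base. Then the class of mappings X → Y admitting a σ-sfd base is closed under pointwise limits of sequences: if each fₙ : X → Y has a σ-sfd base and fₙ → f pointwise, then f has a σ-sfd base. -/

import Mathlib

open Set Topology Ordinal

/-- A family of sets is discrete if every point has an open neighborhood
meeting at most one member of the family. -/
def DiscreteFam {X I : Type*} [TopologicalSpace X] (U : I → Set X) : Prop :=
  ∀ x : X, ∃ V : Set X, IsOpen V ∧ x ∈ V ∧
    ∀ i j : I, (V ∩ U i).Nonempty → (V ∩ U j).Nonempty → i = j

/-- A set is functionally closed (a zero set) if it is the preimage of `{0}`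
under a continuous real-valued function. -/
def FunClosed {X : Type*} [TopologicalSpace X] (F : Set X) : Prop :=
  ∃ f : X → ℝ, Continuous f ∧ F = f ⁻¹' {0}

/-- A set is functionally open if its complement is functionally closed. -/
def FunOpen {X : Type*} [TopologicalSpace X] (U : Set X) : Prop :=
  FunClosed Uᶜ

/-- The pair (α'th functionally multiplicative class, α'th functionally additive class),
defined by transfinite recursion. -/
noncomputable def FunClassPair (X : Type*) [TopologicalSpace X] (α : Ordinal) :
    Set (Set X) × Set (Set X) :=
  if α = 0 then ({F | FunClosed F}, {U | FunOpen U})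
  else
    ({ A | ∃ f : ℕ → Set X, (∀ n, ∃ β, ∃ _ : β < α, f n ∈ (FunClassPair X β).2) ∧ A = ⋂ n, f n },
     { A | ∃ f : ℕ → Set X, (∀ n, ∃ β, ∃ _ : β < α, f n ∈ (FunClassPair X β).1) ∧ A = ⋃ n, f n })
termination_by α

/-- The α'th functionally multiplicative class. -/
noncomputable def FunMul (X : Type*) [TopologicalSpace X] (α : Ordinal) : Set (Set X) :=
  (FunClassPair X α).1

/-- The α'th functionally additive class. -/
noncomputable def FunAdd (X : Type*) [TopologicalSpace X] (α : Ordinal) : Set (Set X) :=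
  (FunClassPair X α).2

/-- Functionally ambiguous sets of class α. -/
noncomputable def FunAmb {X : Type*} [TopologicalSpace X] (α : Ordinal) (A : Set X) : Prop :=
  A ∈ FunAdd X α ∧ A ∈ FunMul X α

/-- A family is strongly functionally discrete (sfd). -/
def SFDFam {X I : Type*} [TopologicalSpace X] (A : I → Set X) : Prop :=
  ∃ U : I → Set X, DiscreteFam U ∧ (∀ i, FunOpen (U i)) ∧ ∀ i, closure (A i) ⊆ U i

/-- A collection of sets is sfd (viewed as a family indexed by itself). -/
def SFDSet {X : Type*} [TopologicalSpace X] (𝒜 : Set (Set X)) : Prop :=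
  SFDFam (fun b : 𝒜 => (b : Set X))

/-- A collection of sets is a well sfd-family. -/
def WellSFDSet {X : Type*} [TopologicalSpace X] (𝒜 : Set (Set X)) : Prop :=
  ∃ U F : 𝒜 → Set X, DiscreteFam U ∧ DiscreteFam F ∧
    (∀ b, FunOpen (U b)) ∧ (∀ b, FunClosed (F b)) ∧
    ∀ b : 𝒜, (b : Set X) ⊆ F b ∧ F b ⊆ U b

/-- An indexed family is σ-sfd if the index set splits into countably many pieces
on each of which the family is sfd. -/
def SigmaSFDFam {X I : Type*} [TopologicalSpace X] (A : I → Set X) : Prop :=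
  ∃ J : ℕ → Set I, (∀ n, SFDFam (fun i : J n => A i)) ∧ (⋃ n, J n) = Set.univ

/-- `B` is a base for the mapping `f`: every preimage of an open set is a union
of members of `B`. -/
def IsBaseFor {X Y : Type*} [TopologicalSpace X] [TopologicalSpace Y]
    (B : Set (Set X)) (f : X → Y) : Prop :=
  ∀ V : Set Y, IsOpen V → ∃ S ⊆ B, f ⁻¹' V = ⋃₀ S

/-- `f` has a σ-strongly-functionally-discrete base. -/
def SigmaSFD {X Y : Type*} [TopologicalSpace X] [TopologicalSpace Y] (f : X → Y) : Prop :=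
  ∃ B : ℕ → Set (Set X), (∀ n, SFDSet (B n)) ∧ IsBaseFor (⋃ n, B n) f

/-- `f` has a σ-sfd base consisting of functionally ambiguous sets of class α. -/
noncomputable def SigmaSFDAmb {X Y : Type*} [TopologicalSpace X] [TopologicalSpace Y]
    (α : Ordinal) (f : X → Y) : Prop :=
  ∃ B : ℕ → Set (Set X), (∀ n, SFDSet (B n)) ∧ (∀ n, ∀ b ∈ B n, FunAmb α b) ∧
    IsBaseFor (⋃ n, B n) f

/-- `f` belongs to the α'th functionally Lebesgue class. -/
noncomputable def LebClass {X Y : Type*} [TopologicalSpace X] [TopologicalSpace Y]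
    (α : Ordinal) (f : X → Y) : Prop :=
  ∀ V : Set Y, IsOpen V → f ⁻¹' V ∈ FunAdd X α

/-- `Y` has a σ-disjoint base. -/
def SigmaDisjointBase (Y : Type*) [TopologicalSpace Y] : Prop :=
  ∃ V : ℕ → Set (Set Y), (∀ m, (V m).PairwiseDisjoint id) ∧
    TopologicalSpace.IsTopologicalBasis (⋃ m, V m)

/-!
Fix a σ-disjoint base `⋃ₘ 𝒱 m` of `Y` and σ-sfd bases `⋃ₚ ℬ k p` of the maps `f k`. For
`B ∈ ℬ k p` with `f k '' B ⊆ W ∈ 𝒱 m`, consider the set of `x ∈ B` such that `f n x ∈ W` for all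
`n ≥ k` and `g x ∈ ⋃₀ 𝒱 m`. Since `f n x → g x` and the members of `𝒱 m` are disjoint open sets,
such an `x` has `g x ∈ W`. For fixed `k, p, m` these sets form an sfd family, because `W` is
determined by a nonempty `B`, and together they form a base for `g`.
-/

open Filter Function

section

variable {X Y : Type*}

theorem Set.PairwiseDisjoint.mem_of_tendsto [TopologicalSpace Y] {α : Type*} {𝒱 : Set (Set Y)}
    (h𝒱 : 𝒱.PairwiseDisjoint id) (h𝒱open : ∀ V ∈ 𝒱, IsOpen V) {l : Filter α} [l.NeBot]
    {u : α → Y} {y : Y} (hu : Tendsto u l (𝓝 y)) {W : Set Y} (hW : W ∈ 𝒱)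
    (hev : ∀ᶠ a in l, u a ∈ W) (hy : y ∈ ⋃₀ 𝒱) : y ∈ W := by
  obtain ⟨W', hW', hyW'⟩ := hy
  obtain ⟨a, haW, haW'⟩ := (hev.and (hu ((h𝒱open W' hW').mem_nhds hyW'))).exists
  rwa [h𝒱.elim_set hW hW' (u a) haW haW']

def mapsToPairs (𝒜 : Set (Set X)) (𝒱 : Set (Set Y)) (h : X → Y) : Set (Set X × Set Y) :=
  {q : Set X × Set Y | q.1 ∈ 𝒜 ∧ q.1.Nonempty ∧ q.2 ∈ 𝒱 ∧ MapsTo h q.1 q.2}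

variable [TopologicalSpace X]

theorem SFDFam.of_subset_comp {I J : Type*} {A : I → Set X} (hA : SFDFam A) {B : J → Set X}
    {φ : J → I} (hφ : Injective φ) (hB : ∀ j, B j ⊆ A (φ j)) : SFDFam B := by
  obtain ⟨U, hUdisc, hUopen, hAU⟩ := hA
  refine ⟨U ∘ φ, fun x => ?_, fun j => hUopen (φ j), fun j => (closure_mono (hB j)).trans (hAU _)⟩
  obtain ⟨V, hVopen, hxV, hV⟩ := hUdisc x
  exact ⟨V, hVopen, hxV, fun i j hi hj => hφ (hV _ _ hi hj)⟩

theorem SFDFam.sfdSet_range {I : Type*} {A : I → Set X} (hA : SFDFam A) : SFDSet (range A) := by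
  choose idx hidx using fun s : range A => s.2
  exact hA.of_subset_comp (φ := idx) (fun s t hst => Subtype.ext (by rw [← hidx s, ← hidx t, hst]))
    fun s => (hidx s).superset

theorem SFDSet.sfdSet_range_inter {𝒜 : Set (Set X)} (h𝒜 : SFDSet 𝒜) {𝒱 : Set (Set Y)}
    (h𝒱 : 𝒱.PairwiseDisjoint id) (h : X → Y) (C : Set Y → Set X) :
    SFDSet (range fun q : mapsToPairs 𝒜 𝒱 h => q.1.1 ∩ C q.1.2) := by
  refine (h𝒜.of_subset_comp (φ := fun q : mapsToPairs 𝒜 𝒱 h => (⟨q.1.1, q.2.1⟩ : 𝒜)) ?_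
    fun _ => inter_subset_left).sfdSet_range
  intro q q' hqq'
  have hB : q.1.1 = q'.1.1 := congrArg Subtype.val hqq'
  obtain ⟨x, hx⟩ := q.2.2.1
  exact Subtype.ext <| Prod.ext hB <|
    h𝒱.elim_set q.2.2.2.1 q'.2.2.2.1 (h x) (q.2.2.2.2 hx) (q'.2.2.2.2 (hB ▸ hx))

variable [TopologicalSpace Y]

theorem isBaseFor_iff {ℬ : Set (Set X)} {g : X → Y} :
    IsBaseFor ℬ g ↔ ∀ V, IsOpen V → ∀ x ∈ g ⁻¹' V, ∃ B ∈ ℬ, x ∈ B ∧ B ⊆ g ⁻¹' V := by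
  refine ⟨fun h V hV x hx => ?_, fun h V hV => ⟨{B ∈ ℬ | B ⊆ g ⁻¹' V}, sep_subset _ _, ?_⟩⟩
  · obtain ⟨S, hSℬ, hS⟩ := h V hV
    obtain ⟨B, hBS, hxB⟩ := (hS ▸ hx : x ∈ ⋃₀ S)
    exact ⟨B, hSℬ hBS, hxB, hS ▸ subset_sUnion_of_mem hBS⟩
  · refine (sUnion_subset fun B hB => hB.2).antisymm' fun x hx => ?_
    obtain ⟨B, hB, hxB, hBV⟩ := h V hV x hx
    exact ⟨B, ⟨hB, hBV⟩, hxB⟩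

theorem sigmaSFD_of_countable {ι : Type*} [Countable ι] [Nonempty ι] {ℬ : ι → Set (Set X)}
    (hℬ : ∀ i, SFDSet (ℬ i)) {g : X → Y} (hg : IsBaseFor (⋃ i, ℬ i) g) : SigmaSFD g := by
  obtain ⟨e, he⟩ := exists_surjective_nat ι
  exact ⟨ℬ ∘ e, fun n => hℬ (e n), by rwa [comp_def, he.iUnion_comp ℬ]⟩

end

theorem stmt18 {X Y : Type*} [TopologicalSpace X] [TopologicalSpace Y]
    (hY : SigmaDisjointBase Y) (f : ℕ → X → Y) (g : X → Y)
    (hf : ∀ n, SigmaSFD (f n))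
    (hconv : ∀ x, Filter.Tendsto (fun n => f n x) Filter.atTop (nhds (g x))) :
    SigmaSFD g := by
  obtain ⟨𝒱, h𝒱disj, h𝒱⟩ := hY
  choose ℬ hℬ hℬbase using hf
  set tail : Set Y → ℕ → Set X := fun W k => {x | ∀ n ≥ k, f n x ∈ W}
  set piece : ℕ × ℕ × ℕ → Set (Set X) := fun i =>
    range fun q : mapsToPairs (ℬ i.1 i.2.1) (𝒱 i.2.2) (f i.1) =>
      q.1.1 ∩ (tail q.1.2 i.1 ∩ g ⁻¹' ⋃₀ 𝒱 i.2.2)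
  refine sigmaSFD_of_countable (ℬ := piece)
    (fun i => (hℬ i.1 i.2.1).sfdSet_range_inter (h𝒱disj i.2.2) (f i.1)
      fun W => tail W i.1 ∩ g ⁻¹' ⋃₀ 𝒱 i.2.2) ?_
  refine isBaseFor_iff.2 fun V hV x hx => ?_
  obtain ⟨W, hW, hxW, hWV⟩ := h𝒱.exists_subset_of_mem_open hx hV
  obtain ⟨m, hWm⟩ := mem_iUnion.1 hW
  obtain ⟨k, hk⟩ := eventually_atTop.1 ((hconv x).eventually_mem ((h𝒱.isOpen hW).mem_nhds hxW))
  obtain ⟨B, hB, hxB, hBW⟩ := isBaseFor_iff.1 (hℬbase k) W (h𝒱.isOpen hW) x (hk k le_rfl)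
  obtain ⟨p, hBp⟩ := mem_iUnion.1 hB
  have hBWpiece : B ∩ (tail W k ∩ g ⁻¹' ⋃₀ 𝒱 m) ∈ piece (k, p, m) :=
    ⟨⟨(B, W), hBp, ⟨x, hxB⟩, hWm, hBW⟩, rfl⟩
  refine ⟨_, mem_iUnion.2 ⟨(k, p, m), hBWpiece⟩, ⟨hxB, hk, W, hWm, hxW⟩, fun z hz => hWV ?_⟩
  exact (h𝒱disj m).mem_of_tendsto (fun V hV => h𝒱.isOpen (mem_iUnion.2 ⟨m, hV⟩)) (hconv z) hWm
    (eventually_atTop.2 ⟨k, hz.2.1⟩) hz.2.2
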